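/- arXiv:2605.03332 — 3 statements merged into one kernel-verified Lean document; each statement's English description precedes it below -/
import Mathlib

section
/- Let (X,d) be a doubling metric space (every ball of radius R contains at most N points mutually ≥ R/2 apart) and O an open subset with X \ O nonempty. Then there exists a countable collection of balls {B(x_i, r_i)} with r_i = dist(x_i, X \ O)/8, whose union is O, and such that the doubled balls B(x_i, 2r_i) have overlap bounded by 2N⁵ (i.e., ∑_i χ_{B(x_i, 2r_i)} ≤ 2N⁵ pointwise). -/
/-!
Let `r x = dist(x, Oᶜ) / 8` and take, by Zorn's lemma, a maximal set `M ⊆ O` of centres with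
`min (r a) (r b) ≤ dist a b`. A point of `O` not covered by the balls `B(x, r x)`, `x ∈ M`, could be
added to `M`, so these balls cover `O`; they lie in `O` because `r x < dist(x, Oᶜ)`. Since
`dist(·, Oᶜ)` is 1-Lipschitz, the centres `x ∈ M` with `z ∈ B(x, 2 r x)` have `dist(x, Oᶜ)`
comparable to `δ = dist(z, Oᶜ)`: they lie in `B(z, δ/3)` and are `δ/10`-separated, and three
halvings of the doubling condition leave at most `N³` of them. The same count on the pieces of `M`
where `r` is bounded below and which are bounded shows that `M` is countable.
-/

open Metric Set

def IsDoubling (X : Type*) [PseudoMetricSpace X] (N : ℕ) : Prop :=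
  ∀ (x : X) (R : ℝ), 0 < R → ∃ S : Finset X, S.card ≤ N ∧ ball x R ⊆ ⋃ y ∈ S, ball y (R / 2)

theorem exists_maximal_pairwise_subset {α : Type*} (r : α → α → Prop) (O : Set α) :
    ∃ M, Maximal (fun S => S ⊆ O ∧ S.Pairwise r) M :=
  zorn_subset _ fun c hc hchain =>
    ⟨⋃₀ c, ⟨sUnion_subset fun _ hs => (hc hs).1,
      (pairwise_sUnion hchain.directedOn).2 fun _ hs => (hc hs).2⟩,
      fun _ hs => subset_sUnion_of_mem hs⟩

theorem Set.Countable.exists_injective_range_eq {X : Type*} {M : Set X} (hM : M.Countable) :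
    ∃ (ι : Type) (_ : Countable ι) (c : ι → X), Function.Injective c ∧ range c = M := by
  have := hM.to_subtype
  let e : Shrink.{0} M ≃ M := (equivShrink.{0} M).symm
  refine ⟨Shrink.{0} M, Countable.of_equiv _ e.symm, (↑) ∘ e,
    Subtype.val_injective.comp e.injective, ?_⟩
  rw [e.surjective.range_comp, Subtype.range_coe]

section PseudoMetric

variable {X : Type*} [PseudoMetricSpace X]

theorem Set.Pairwise.finite_and_ncard_le_of_subset_biUnion_ball {T : Set X} {F : Finset X}
    {ρ δ : ℝ} (hsep : T.Pairwise fun a b => δ ≤ dist a b) (hρδ : 2 * ρ ≤ δ)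
    (hT : T ⊆ ⋃ y ∈ F, ball y ρ) : T.Finite ∧ T.ncard ≤ F.card := by
  have hcentre : ∀ t ∈ T, ∃ y ∈ F, t ∈ ball y ρ := fun t ht => by simpa using hT ht
  choose! g hgF hg using hcentre
  have hmaps : MapsTo g T F := hgF
  have hinj : InjOn g T := by
    intro a ha b hb hab
    by_contra hne
    have hga := mem_ball.1 (hg a ha)
    have hgb := mem_ball.1 (hg b hb)
    rw [hab] at hga
    linarith [hsep ha hb hne, dist_triangle_right a b (g b)]
  refine ⟨Finite.of_injOn hmaps hinj F.finite_toSet, ?_⟩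
  simpa using ncard_le_ncard_of_injOn g hmaps hinj F.finite_toSet

theorem Maximal.subset_biUnion_ball {M O : Set X} {ρ : X → ℝ}
    (hM : Maximal (fun S => S ⊆ O ∧ S.Pairwise fun a b => min (ρ a) (ρ b) ≤ dist a b) M)
    (hρ : ∀ x ∈ O, 0 < ρ x) : O ⊆ ⋃ x ∈ M, ball x (ρ x) := by
  intro z hz
  by_cases hzM : z ∈ M
  · exact mem_iUnion₂.2 ⟨z, hzM, mem_ball_self (hρ z hz)⟩
  obtain ⟨x, hxM, hzx⟩ : ∃ x ∈ M, dist z x < min (ρ z) (ρ x) := by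
    by_contra! hfar
    refine hzM (hM.mem_of_prop_insert ⟨insert_subset hz hM.prop.1, ?_⟩)
    refine pairwise_insert.2 ⟨hM.prop.2, fun b hb _ => ⟨hfar b hb, ?_⟩⟩
    rw [min_comm, dist_comm]
    exact hfar b hb
  exact mem_iUnion₂.2 ⟨x, hxM, mem_ball.2 (hzx.trans_le (min_le_right _ _))⟩

namespace IsDoubling

variable {N : ℕ}

theorem exists_finset_subset_biUnion_ball_pow (h : IsDoubling X N) (k : ℕ) (x : X) {R : ℝ}
    (hR : 0 < R) : ∃ S : Finset X, S.card ≤ N ^ k ∧ ball x R ⊆ ⋃ y ∈ S, ball y (R / 2 ^ k) := by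
  classical
  induction k with
  | zero => exact ⟨{x}, by simp, by simp⟩
  | succ k ih =>
    obtain ⟨F, hFcard, hFcov⟩ := ih
    choose G hGcard hGcov using fun y : X => h y (R / 2 ^ k) (by positivity)
    refine ⟨F.biUnion G, ?_, ?_⟩
    · calc (F.biUnion G).card ≤ ∑ y ∈ F, (G y).card := Finset.card_biUnion_le
        _ ≤ F.card * N := by simpa using Finset.sum_le_sum fun y _ => hGcard y
        _ ≤ N ^ (k + 1) := by rw [pow_succ]; exact Nat.mul_le_mul_right _ hFcard
    · intro z hz
      obtain ⟨y, hyF, hzy⟩ := mem_iUnion₂.1 (hFcov hz)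
      obtain ⟨w, hwG, hzw⟩ := mem_iUnion₂.1 (hGcov y hzy)
      rw [div_div, ← pow_succ] at hzw
      exact mem_iUnion₂.2 ⟨w, Finset.mem_biUnion.2 ⟨y, hyF, hwG⟩, hzw⟩

theorem finite_and_ncard_le_pow (h : IsDoubling X N) {T : Set X} {x : X} {R δ : ℝ} {k : ℕ}
    (hR : 0 < R) (hT : T ⊆ ball x R) (hk : 2 * (R / 2 ^ k) ≤ δ)
    (hsep : T.Pairwise fun a b => δ ≤ dist a b) : T.Finite ∧ T.ncard ≤ N ^ k := by
  obtain ⟨F, hFcard, hFcov⟩ := h.exists_finset_subset_biUnion_ball_pow k x hR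
  obtain ⟨hfin, hcard⟩ := hsep.finite_and_ncard_le_of_subset_biUnion_ball hk (hT.trans hFcov)
  exact ⟨hfin, hcard.trans hFcard⟩

theorem finite_of_pairwise_le_dist (h : IsDoubling X N) {T : Set X} {x : X} {R ε : ℝ}
    (hR : 0 < R) (hε : 0 < ε) (hT : T ⊆ ball x R) (hsep : T.Pairwise fun a b => ε ≤ dist a b) :
    T.Finite := by
  obtain ⟨k, hk⟩ := pow_unbounded_of_one_lt (2 * R / ε) one_lt_two
  refine (h.finite_and_ncard_le_pow (k := k) hR hT ?_ hsep).1
  rw [div_lt_iff₀ hε] at hk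
  rw [mul_div_assoc', div_le_iff₀ (by positivity)]
  linarith

theorem countable_of_pairwise_min_le_dist (h : IsDoubling X N) {M : Set X} {ρ : X → ℝ}
    (hρ : ∀ x ∈ M, 0 < ρ x) (hsep : M.Pairwise fun a b => min (ρ a) (ρ b) ≤ dist a b) :
    M.Countable := by
  rcases M.eq_empty_or_nonempty with rfl | ⟨p, -⟩
  · exact countable_empty
  have hcover : M ⊆ ⋃ n : ℕ, ⋃ m : ℕ, {x ∈ M | 1 / ((n : ℝ) + 1) ≤ ρ x} ∩ ball p (m + 1) := by
    intro x hx
    obtain ⟨n, hn⟩ := exists_nat_one_div_lt (hρ x hx)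
    obtain ⟨m, hm⟩ := exists_nat_gt (dist x p)
    exact mem_iUnion₂.2 ⟨n, m, ⟨hx, hn.le⟩, mem_ball.2 (by linarith)⟩
  refine .mono hcover (countable_iUnion fun n => countable_iUnion fun m => Finite.countable ?_)
  refine h.finite_of_pairwise_le_dist (by positivity) (Nat.one_div_pos_of_nat (n := n))
    inter_subset_right ?_
  intro a ha b hb hab
  exact (le_min ha.1.2 hb.1.2).trans (hsep ha.1.1 hb.1.1 hab)

theorem ncard_whitney_overlap_le (h : IsDoubling X N) {s M : Set X}
    (hM : M.Pairwise fun a b => min (infDist a s / 8) (infDist b s / 8) ≤ dist a b) (z : X) :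
    {x ∈ M | z ∈ ball x (2 * (infDist x s / 8))}.ncard ≤ N ^ 3 := by
  set T := {x ∈ M | z ∈ ball x (2 * (infDist x s / 8))}
  have hcomparable : ∀ x ∈ T, infDist z s / 10 ≤ infDist x s / 8 ∧ dist x z < infDist z s / 3 := by
    rintro x ⟨-, hx⟩
    rw [mem_ball] at hx
    -- `infDist · s` is 1-Lipschitz and `dist z x < infDist x s / 4`
    have hxz : infDist x s ≤ infDist z s + dist x z := infDist_le_infDist_add_dist
    have hzx : infDist z s ≤ infDist x s + dist z x := infDist_le_infDist_add_dist
    constructor <;> linarith [dist_comm x z]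
  rcases T.eq_empty_or_nonempty with hT | ⟨x₀, hx₀⟩
  · simp [hT]
  have hz : 0 < infDist z s := by linarith [(hcomparable x₀ hx₀).2, dist_nonneg (x := x₀) (y := z)]
  refine (h.finite_and_ncard_le_pow (x := z) (δ := infDist z s / 10) (k := 3) (by positivity)
    (fun x hx => mem_ball.2 (hcomparable x hx).2) ?_ ?_).2
  · linarith
  · intro a ha b hb hab
    exact (le_min (hcomparable a ha).1 (hcomparable b hb).1).trans (hM ha.1 hb.1 hab)

end IsDoubling

theorem IsOpen.infDist_compl_pos {O : Set X} (hO : IsOpen O) (hne : Oᶜ.Nonempty) {x : X}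
    (hx : x ∈ O) : 0 < infDist x Oᶜ :=
  (hO.isClosed_compl.notMem_iff_infDist_pos hne).1 (not_not_intro hx)

theorem eq_biUnion_ball_infDist_compl_div_eight {O M : Set X} (hO : IsOpen O) (hne : Oᶜ.Nonempty)
    (hM : Maximal (fun S => S ⊆ O ∧
      S.Pairwise fun a b => min (infDist a Oᶜ / 8) (infDist b Oᶜ / 8) ≤ dist a b) M) :
    O = ⋃ x ∈ M, ball x (infDist x Oᶜ / 8) := by
  refine (hM.subset_biUnion_ball fun x hx => ?_).antisymm (iUnion₂_subset fun x _ => ?_)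
  · exact div_pos (hO.infDist_compl_pos hne hx) (by norm_num)
  · exact (ball_subset_ball (by linarith [infDist_nonneg (x := x) (s := Oᶜ)])).trans
      ball_infDist_compl_subset

end PseudoMetric

/-- Whitney ball decomposition of an open set `O` (with nonempty complement) in an
`N`-doubling metric space: countably many balls `B(x_i, r_i)` with
`r_i = dist(x_i, X \ O)/8`, whose union is `O`, and whose doubled balls have
pointwise overlap at most `2 N⁵`. -/
theorem stmt_5 {X : Type*} [MetricSpace X] (N : ℕ)
    (hdoub : ∀ (x : X) (R : ℝ), 0 < R → ∃ S : Finset X, S.card ≤ N ∧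
      ball x R ⊆ ⋃ y ∈ S, ball y (R / 2))
    (O : Set X) (hO : IsOpen O) (hne : Oᶜ.Nonempty) :
    ∃ (ι : Type) (_ : Countable ι) (c : ι → X) (rad : ι → ℝ),
      (∀ i, rad i = infDist (c i) Oᶜ / 8) ∧
      O = ⋃ i, ball (c i) (rad i) ∧
      ∀ x : X, {i : ι | x ∈ ball (c i) (2 * rad i)}.ncard ≤ 2 * N ^ 5 := by
  have hdoub : IsDoubling X N := hdoub
  obtain ⟨M, hM⟩ := exists_maximal_pairwise_subset
    (fun a b : X => min (infDist a Oᶜ / 8) (infDist b Oᶜ / 8) ≤ dist a b) O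
  have hcover := eq_biUnion_ball_infDist_compl_div_eight hO hne hM
  have hpos : ∀ x ∈ M, 0 < infDist x Oᶜ / 8 := fun x hx =>
    div_pos (hO.infDist_compl_pos hne (hM.prop.1 hx)) (by norm_num)
  obtain ⟨ι, hι, c, hc, hrange⟩ :=
    (hdoub.countable_of_pairwise_min_le_dist hpos hM.prop.2).exists_injective_range_eq
  refine ⟨ι, hι, c, fun i => infDist (c i) Oᶜ / 8, fun _ => rfl, ?_, fun z => ?_⟩
  · rw [← biUnion_range (g := fun x => ball x (infDist x Oᶜ / 8)), hrange, ← hcover]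
  · have hpre : {i | z ∈ ball (c i) (2 * (infDist (c i) Oᶜ / 8))} =
        c ⁻¹' {x ∈ M | z ∈ ball x (2 * (infDist x Oᶜ / 8))} := by
      ext i
      simp [← hrange]
    rw [hpre, ncard_preimage_of_injective_subset_range hc (hrange ▸ sep_subset _ _)]
    refine (hdoub.ncard_whitney_overlap_le hM.prop.2 z).trans ?_
    rcases N.eq_zero_or_pos with rfl | hN
    · simp
    · calc N ^ 3 ≤ N ^ 5 := Nat.pow_le_pow_right hN (by norm_num)
        _ ≤ 2 * N ^ 5 := by omega
end

section
/- Let X_r be a maximal r-separated subset of a doubling metric space X with graph x̄ ∼ ȳ iff 0 < d(x̄,ȳ) ≤ 3r, and let u : X_r → ℝ. Define the Whitney projection P_r u by P_r u(x) = u(x̄) for x ∈ B̄(x̄, r/4) and P_r u(x) = ∑_i u(x̄_i) φ_i(x) on O = X \ ⋃_{x̄} B̄(x̄, r/4), where {φ_i} is a Whitney partition of unity for O and x̄_i ∈ X_r realizes dist(x_i, ⋃ B̄(x̄, r/4)). Then P_r u is locally Lipschitz: there is a constant C, depending only on the doubling data, such that |P_r u(x) − P_r u(y)| ≤ C (sup_{w̄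 ∈ X_r ∩ B(x, 3r)} |∇_r u|(w̄)) d(x,y) whenever d(x,y) < r, where |∇_r u|(w̄) = ∑_{ȳ ∼ w̄} |u(w̄) − u(ȳ)|/r. -/
/-! Separation and doubling make `X_r ∩ B` finite for every ball `B`, so `G`, the supremum of the
discrete gradient over `X_r ∩ B(x, 3r)`, bounds `|u(p) - u(q)|` by `r G` for net points `p, q` near
`x` within `3r` of each other; chaining three such steps gives `3 r G` for any two net points near
`x`. A Whitney ball containing `z` has radius comparable to `dist(z, Oᶜ) < r`, and its net point
`x̄_i` lies within `(5/3) dist(z, Oᶜ) + r/4` of `z`. On `O`,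
`P_r u(x) - P_r u(y) = ∑ (u(x̄_i) - u(x̄_{i₀}))(φ_i(x) - φ_i(y))`; as distinct net points are `r`
apart, a term with `x̄_i ≠ x̄_{i₀}` forces either `d(x, y) ≳ r`, where `|φ_i(x) - φ_i(y)| ≤ 1`
suffices, or `r_i ≳ r`, where the Lipschitz constant `C₀ / r_i` of `φ_i` is `≲ C₀ / r`. When `x` or
`y` lies in a ball `B̄(x̄, r/4)` the same argument runs with `u(x̄)` as anchor. -/

open Metric

/-- The discrete gradient of `u` on the graph `Xr` (neighbors iff `0 < d ≤ 3r`):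
`|∇_r u|(w) = ∑_{y ∼ w} |u(w) - u(y)|/r`. -/
noncomputable def discreteGrad {X : Type*} [MetricSpace X]
    (r : ℝ) (Xr : Set X) (u : X → ℝ) (w : X) : ℝ :=
  ∑' y : {y : X // y ∈ Xr ∧ 0 < dist w y ∧ dist w y ≤ 3 * r}, |u w - u (y : X)| / r

theorem finite_inter_ball_of_separated {X : Type*} [PseudoMetricSpace X]
    (hdoub : ∀ (x : X) (R : ℝ), 0 < R → ∃ S : Finset X, ball x R ⊆ ⋃ y ∈ S, ball y (R / 2))
    {r : ℝ} (hr : 0 < r) {S : Set X} (hsep : ∀ x ∈ S, ∀ y ∈ S, x ≠ y → r ≤ dist x y)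
    (z : X) (R : ℝ) : (S ∩ ball z R).Finite := by
  suffices h : ∀ k : ℕ, ∀ z R, R ≤ 2 ^ k * (r / 2) → (S ∩ ball z R).Finite by
    obtain ⟨k, hk⟩ := pow_unbounded_of_one_lt (R / (r / 2)) one_lt_two
    exact h k z R ((div_le_iff₀ (by positivity)).1 hk.le)
  intro k
  induction k with
  | zero =>
    refine fun z R hR => Set.Subsingleton.finite ?_
    rintro p ⟨hp, hpz⟩ q ⟨hq, hqz⟩
    by_contra hpq
    linarith [hsep p hp q hq hpq, mem_ball.1 hpz, mem_ball.1 hqz, dist_triangle_right p q z]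
  | succ k ih =>
    intro z R hR
    rcases le_or_gt R 0 with hR0 | hR0
    · simp [ball_eq_empty.2 hR0]
    obtain ⟨T, hT⟩ := hdoub z R hR0
    have hR2 : R / 2 ≤ 2 ^ k * (r / 2) := by rw [pow_succ] at hR; linarith
    refine (T.finite_toSet.biUnion fun p _ => ih p (R / 2) hR2).subset ?_
    rintro q ⟨hq, hqz⟩
    obtain ⟨p, hp, hqp⟩ := Set.mem_iUnion₂.1 (hT hqz)
    exact Set.mem_iUnion₂.2 ⟨p, hp, hq, hqp⟩

section DiscreteGradient

variable {X : Type*} [MetricSpace X] {r : ℝ} {Xr : Set X} {u : X → ℝ}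

theorem discreteGrad_nonneg (hr : 0 ≤ r) (w : X) : 0 ≤ discreteGrad r Xr u w :=
  tsum_nonneg fun _ => by positivity

theorem abs_sub_le_mul_discreteGrad (hr : 0 < r) {p q : X}
    (hfin : (Xr ∩ closedBall p (3 * r)).Finite) (hq : q ∈ Xr) (hpq : dist p q ≤ 3 * r) :
    |u p - u q| ≤ r * discreteGrad r Xr u p := by
  rcases eq_or_ne p q with rfl | hne
  · simpa using mul_nonneg hr.le (discreteGrad_nonneg hr.le p)
  have : Finite {y : X // y ∈ Xr ∧ 0 < dist p y ∧ dist p y ≤ 3 * r} :=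
    (hfin.subset fun y hy => ⟨hy.1, mem_closedBall'.2 hy.2.2⟩).to_subtype
  have hle : |u p - u q| / r ≤ discreteGrad r Xr u p :=
    Summable.of_finite.le_tsum (f := fun y : {y : X // y ∈ Xr ∧ 0 < dist p y ∧ dist p y ≤ 3 * r} =>
      |u p - u y| / r) ⟨q, hq, dist_pos.2 hne, hpq⟩ fun _ _ => by positivity
  rwa [div_le_iff₀ hr, mul_comm] at hle

theorem abs_sub_le_mul_sSup_discreteGrad (hr : 0 < r)
    (hfin : ∀ z R, (Xr ∩ ball z R).Finite) {x p q : X} (hp : p ∈ Xr) (hxp : dist x p < 3 * r)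
    (hq : q ∈ Xr) (hpq : dist p q ≤ 3 * r) :
    |u p - u q| ≤ r * sSup ((fun w => discreteGrad r Xr u w) '' (Xr ∩ ball x (3 * r))) := by
  have hfin' : (Xr ∩ closedBall p (3 * r)).Finite :=
    (hfin p (4 * r)).subset (Set.inter_subset_inter_right _ (closedBall_subset_ball (by linarith)))
  refine (abs_sub_le_mul_discreteGrad hr hfin' hq hpq).trans (mul_le_mul_of_nonneg_left ?_ hr.le)
  exact le_csSup ((hfin x (3 * r)).image _).bddAbove ⟨p, ⟨hp, mem_ball'.2 hxp⟩, rfl⟩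

theorem abs_sub_le_three_mul_sSup_discreteGrad (hr : 0 < r)
    (hfin : ∀ z R, (Xr ∩ ball z R).Finite) (hmaxsep : ∀ x : X, ∃ a ∈ Xr, dist x a < r)
    {x z p q : X} (hxz : dist x z < r) (hp : p ∈ Xr) (hq : q ∈ Xr) (hzp : dist z p < 2 * r)
    (hxq : dist x q < 2 * r) :
    |u p - u q| ≤ 3 * r * sSup ((fun w => discreteGrad r Xr u w) '' (Xr ∩ ball x (3 * r))) := by
  obtain ⟨a, ha, hxa⟩ := hmaxsep x
  obtain ⟨b, hb, hzb⟩ := hmaxsep z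
  have hxb : dist x b < 3 * r := by linarith [dist_triangle x z b]
  have hbp := abs_sub_le_mul_sSup_discreteGrad (u := u) hr hfin hb hxb hp
    (by linarith [dist_triangle_left b p z])
  have hba := abs_sub_le_mul_sSup_discreteGrad (u := u) hr hfin hb hxb ha
    (by linarith [dist_triangle4 b z x a, dist_comm b z, dist_comm z x])
  have haq := abs_sub_le_mul_sSup_discreteGrad (u := u) hr hfin ha (by linarith) hq
    (by linarith [dist_triangle_left a q x])
  rw [abs_sub_comm] at hbp
  linarith [abs_sub_le (u p) (u b) (u q), abs_sub_le (u b) (u a) (u q)]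

end DiscreteGradient

theorem abs_sub_le_of_mem_closedBall_of_separated {X : Type*} [PseudoMetricSpace X] {r M : ℝ}
    {Xr : Set X} {u : X → ℝ} (hr : 0 < r) (hsep : ∀ x ∈ Xr, ∀ y ∈ Xr, x ≠ y → r ≤ dist x y)
    (hM : 0 ≤ M) {x y w w' : X} (hw : w ∈ Xr) (hw' : w' ∈ Xr) (hxw : x ∈ closedBall w (r / 4))
    (hyw' : y ∈ closedBall w' (r / 4)) (hu : |u w - u w'| ≤ M) :
    |u w - u w'| ≤ 2 * M / r * dist x y := by
  rcases eq_or_ne w w' with rfl | hne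
  · rw [sub_self, abs_zero]
    positivity
  have hfar : r ≤ 2 * dist x y := by
    linarith [hsep w hw w' hw' hne, dist_triangle4 w x y w', dist_comm w x,
      mem_closedBall.1 hxw, mem_closedBall.1 hyw']
  rw [div_mul_eq_mul_div, le_div_iff₀ hr]
  nlinarith

theorem abs_sum_mul_sub_le {ι : Type*} {s : Finset ι} {a f : ι → ℝ}
    (hf : ∑ i ∈ s, f i = 1) (hf0 : ∀ i ∈ s, 0 ≤ f i) {v B : ℝ}
    (hB : ∀ i ∈ s, f i ≠ 0 → |a i - v| ≤ B) : |∑ i ∈ s, a i * f i - v| ≤ B := by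
  have hdiff : ∑ i ∈ s, a i * f i - v = ∑ i ∈ s, (a i - v) * f i := by
    simp only [sub_mul, Finset.sum_sub_distrib, ← Finset.mul_sum, hf, mul_one]
  calc |∑ i ∈ s, a i * f i - v| ≤ ∑ i ∈ s, |a i - v| * f i := by
        rw [hdiff]
        refine (Finset.abs_sum_le_sum_abs _ _).trans_eq (Finset.sum_congr rfl fun i hi => ?_)
        rw [abs_mul, abs_of_nonneg (hf0 i hi)]
    _ ≤ ∑ i ∈ s, B * f i := by
        refine Finset.sum_le_sum fun i hi => ?_
        rcases eq_or_ne (f i) 0 with h0 | h0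
        · simp [h0]
        · exact mul_le_mul_of_nonneg_right (hB i hi h0) (hf0 i hi)
    _ = B := by rw [← Finset.mul_sum, hf, mul_one]

theorem abs_sum_mul_sub_sum_mul_le {ι : Type*} {s : Finset ι} {a f g : ι → ℝ}
    (hf : ∑ i ∈ s, f i = 1) (hg : ∑ i ∈ s, g i = 1) (v : ℝ) {B : ℝ}
    (hB : ∀ i ∈ s, |a i - v| * |f i - g i| ≤ B) :
    |∑ i ∈ s, a i * f i - ∑ i ∈ s, a i * g i| ≤ s.card * B := by
  have hdiff : ∑ i ∈ s, a i * f i - ∑ i ∈ s, a i * g i = ∑ i ∈ s, (a i - v) * (f i - g i) := by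
    simp only [mul_sub, sub_mul, Finset.sum_sub_distrib, ← Finset.mul_sum, hf, hg]
    ring
  rw [hdiff]
  refine (Finset.abs_sum_le_sum_abs _ _).trans ?_
  simpa [abs_mul] using
    Finset.sum_le_card_nsmul s _ B fun i hi => by simpa [abs_mul] using hB i hi

theorem whitney_ball_bounds {X : Type*} [PseudoMetricSpace X] {K : Set X} {c b z : X} {ρ s : ℝ}
    (hs : 0 ≤ s) (hρ : ρ = infDist c K / 8) (hcb : infDist c K = infDist c (closedBall b s))
    (hz : z ∈ ball c (2 * ρ)) :
    0 < ρ ∧ 6 * ρ ≤ infDist z K ∧ infDist z K ≤ 10 * ρ ∧ dist z b ≤ 10 * ρ + s := by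
  have hzc := mem_ball.1 hz
  have hcb' : dist c b - s ≤ infDist c (closedBall b s) :=
    (le_infDist ⟨b, mem_closedBall_self hs⟩).2 fun y hy => by
      linarith [dist_triangle c y b, mem_closedBall.1 hy]
  have h₁ : infDist z K ≤ infDist c K + dist z c := infDist_le_infDist_add_dist
  have h₂ : infDist c K ≤ infDist z K + dist c z := infDist_le_infDist_add_dist
  refine ⟨by linarith [dist_nonneg (x := z) (y := c)], by linarith [dist_comm c z],
    by linarith, by linarith [dist_triangle z c b]⟩

namespace WhitneyProjection

theorem eq_sum_of_support_subset {X ι : Type*} {O : Set X} {φ : ι → X → ℝ} {xb : ι → X}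
    {u P : X → ℝ}
    (hφsum : ∀ x ∈ O, ∑' i, φ i x = 1)
    (hP2 : ∀ x ∈ O, P x = ∑' i, u (xb i) * φ i x) {x : X} (hx : x ∈ O) {s : Finset ι}
    (hs : ∀ i, φ i x ≠ 0 → i ∈ s) :
    P x = ∑ i ∈ s, u (xb i) * φ i x ∧ ∑ i ∈ s, φ i x = 1 := by
  have h0 : ∀ i ∉ s, φ i x = 0 := fun i hi => by_contra fun h => hi (hs i h)
  exact ⟨by rw [hP2 x hx, tsum_eq_sum fun i hi => by simp [h0 i hi]],
    by rw [← hφsum x hx, tsum_eq_sum h0]⟩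

variable {X : Type*} [MetricSpace X] {r : ℝ} {Xr : Set X} {u : X → ℝ} {O : Set X} {ι : Type*}
  {c : ι → X} {rad : ι → ℝ} {φ : ι → X → ℝ} {xb : ι → X} {P : X → ℝ} {C₀ M : ℝ}

theorem infDist_compl_lt (hr : 0 < r) (hmaxsep : ∀ x : X, ∃ a ∈ Xr, dist x a < r)
    (hO : O = (⋃ xb ∈ Xr, closedBall xb (r / 4))ᶜ) (z : X) : infDist z Oᶜ < r := by
  obtain ⟨a, ha, hza⟩ := hmaxsep z
  have haO : a ∈ Oᶜ := by
    rw [hO, compl_compl]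
    exact Set.mem_biUnion ha (mem_closedBall_self (by positivity))
  exact (infDist_le_dist_of_mem haO).trans_lt hza

theorem bounds_of_ne_zero (hr : 0 < r) (hrad : ∀ i, rad i = infDist (c i) Oᶜ / 8)
    (hxb : ∀ i, xb i ∈ Xr ∧ infDist (c i) Oᶜ = infDist (c i) (closedBall (xb i) (r / 4)))
    (hφsupp : ∀ i, ∀ x ∉ ball (c i) (2 * rad i), φ i x = 0) {i : ι} {z : X} (h : φ i z ≠ 0) :
    0 < rad i ∧ 6 * rad i ≤ infDist z Oᶜ ∧ infDist z Oᶜ ≤ 10 * rad i ∧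
      dist z (xb i) ≤ 10 * rad i + r / 4 :=
  whitney_ball_bounds (by positivity) (hrad i) (hxb i).2 (not_imp_comm.1 (hφsupp i z) h)

theorem abs_sub_le_of_mem_of_not_mem (hr : 0 < r)
    (hsep : ∀ x ∈ Xr, ∀ y ∈ Xr, x ≠ y → r ≤ dist x y)
    (hrad : ∀ i, rad i = infDist (c i) Oᶜ / 8)
    (hφsupp : ∀ i, ∀ x ∉ ball (c i) (2 * rad i), φ i x = 0)
    (hφcount : ∀ x ∈ O, ({i : ι | φ i x ≠ 0}).Finite ∧ ({i : ι | φ i x ≠ 0}).ncard ≤ C₀)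
    (hφ01 : ∀ i x, 0 ≤ φ i x ∧ φ i x ≤ 1)
    (hφsum : ∀ x ∈ O, ∑' i, φ i x = 1)
    (hxb : ∀ i, xb i ∈ Xr ∧ infDist (c i) Oᶜ = infDist (c i) (closedBall (xb i) (r / 4)))
    (hP2 : ∀ x ∈ O, P x = ∑' i, u (xb i) * φ i x)
    (hM : 0 ≤ M) (hδ : ∀ z, infDist z Oᶜ < r) {z z' w : X} (hz : z ∈ O) (hw : w ∈ Xr)
    (hz'w : z' ∈ closedBall w (r / 4)) (hz' : z' ∉ O)
    (hosc : ∀ p ∈ Xr, dist z p < 2 * r → |u p - u w| ≤ M) :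
    |P z - u w| ≤ 6 * M / r * dist z z' := by
  obtain ⟨hfin, -⟩ := hφcount z hz
  obtain ⟨hPz, hsum⟩ := eq_sum_of_support_subset hφsum hP2 hz (s := hfin.toFinset) fun i h =>
    hfin.mem_toFinset.2 h
  rw [hPz]
  refine abs_sum_mul_sub_le hsum (fun i _ => (hφ01 i z).1) fun i _ hi => ?_
  obtain ⟨-, h6, -, hzb⟩ := bounds_of_ne_zero hr hrad hxb hφsupp hi
  have hδz : infDist z Oᶜ ≤ dist z z' := infDist_le_dist_of_mem hz'
  have hu := hosc (xb i) (hxb i).1 (by linarith [hδ z])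
  rcases eq_or_ne (xb i) w with heq | hne
  · rw [heq, sub_self, abs_zero]
    positivity
  have hsepi := hsep _ (hxb i).1 _ hw hne
  have hfar : r ≤ 16 / 3 * dist z z' := by
    linarith [dist_triangle4 (xb i) z z' w, dist_comm (xb i) z, mem_closedBall.1 hz'w]
  rw [div_mul_eq_mul_div, le_div_iff₀ hr]
  nlinarith

theorem abs_sub_mul_abs_sub_le (hr : 0 < r)
    (hsep : ∀ x ∈ Xr, ∀ y ∈ Xr, x ≠ y → r ≤ dist x y)
    (hC₀ : 1 ≤ C₀)
    (hrad : ∀ i, rad i = infDist (c i) Oᶜ / 8)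
    (hφsupp : ∀ i, ∀ x ∉ ball (c i) (2 * rad i), φ i x = 0)
    (hφ01 : ∀ i x, 0 ≤ φ i x ∧ φ i x ≤ 1)
    (hφlip : ∀ i, ∀ x y : X, |φ i x - φ i y| ≤ (C₀ / rad i) * dist x y)
    (hxb : ∀ i, xb i ∈ Xr ∧ infDist (c i) Oᶜ = infDist (c i) (closedBall (xb i) (r / 4)))
    (hM : 0 ≤ M) (hδ : ∀ z, infDist z Oᶜ < r) {x y : X} (hxy : dist x y < r)
    (hosc : ∀ p ∈ Xr, ∀ q ∈ Xr, (dist x p < 2 * r ∨ dist y p < 2 * r) → dist x q < 2 * r →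
      |u p - u q| ≤ M)
    {i₀ : ι} (hi₀ : φ i₀ x ≠ 0) (i : ι) :
    |u (xb i) - u (xb i₀)| * |φ i x - φ i y| ≤ 80 * C₀ * M / r * dist x y := by
  have hB : 0 ≤ 80 * C₀ * M / r * dist x y := by
    have : 0 ≤ C₀ := by linarith
    positivity
  rcases eq_or_ne (xb i) (xb i₀) with heq | hne
  · simpa [heq] using hB
  by_cases hxy0 : φ i x = 0 ∧ φ i y = 0
  · simpa [hxy0.1, hxy0.2] using hB
  obtain ⟨z, hzxy, hz⟩ : ∃ z, (z = x ∨ z = y) ∧ φ i z ≠ 0 := by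
    rcases not_and_or.1 hxy0 with h | h
    exacts [⟨x, .inl rfl, h⟩, ⟨y, .inr rfl, h⟩]
  have hxz : dist x z ≤ dist x y := by rcases hzxy with rfl | rfl <;> simp
  obtain ⟨hρ, h6, h10, hzb⟩ := bounds_of_ne_zero hr hrad hxb hφsupp hz
  obtain ⟨-, h6₀, -, hxb₀⟩ := bounds_of_ne_zero hr hrad hxb hφsupp hi₀
  have hδx : infDist x Oᶜ ≤ infDist z Oᶜ + dist x z := infDist_le_infDist_add_dist
  have hu : |u (xb i) - u (xb i₀)| ≤ M := by
    refine hosc _ (hxb i).1 _ (hxb i₀).1 ?_ (by linarith [hδ x])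
    rcases hzxy with h | h <;> subst z
    exacts [.inl (by linarith [hδ x]), .inr (by linarith [hδ y])]
  have hsep' : r / 2 ≤ 80 / 3 * rad i + 8 / 3 * dist x y := by
    linarith [hsep _ (hxb i).1 _ (hxb i₀).1 hne, dist_triangle4 (xb i) z x (xb i₀),
      dist_comm (xb i) z, dist_comm z x]
  rcases le_or_gt (r / 16) (dist x y) with hfar | hnear
  · have hφ : |φ i x - φ i y| ≤ 1 := abs_sub_le_iff.2
      ⟨by linarith [(hφ01 i x).2, (hφ01 i y).1], by linarith [(hφ01 i x).1, (hφ01 i y).2]⟩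
    calc |u (xb i) - u (xb i₀)| * |φ i x - φ i y| ≤ M * 1 := mul_le_mul hu hφ (abs_nonneg _) hM
      _ ≤ 80 * C₀ * M / r * dist x y := by
        rw [div_mul_eq_mul_div, le_div_iff₀ hr]
        nlinarith [mul_nonneg hM (show 0 ≤ 80 * C₀ * dist x y - r by nlinarith)]
  · have hφ : |φ i x - φ i y| ≤ 80 * C₀ / r * dist x y := by
      refine (hφlip i x y).trans (mul_le_mul_of_nonneg_right ?_ dist_nonneg)
      rw [div_le_div_iff₀ hρ hr]
      nlinarith
    calc |u (xb i) - u (xb i₀)| * |φ i x - φ i y| ≤ M * (80 * C₀ / r * dist x y) :=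
          mul_le_mul hu hφ (abs_nonneg _) hM
      _ = 80 * C₀ * M / r * dist x y := by ring

theorem abs_sub_le_of_mem_of_mem (hr : 0 < r)
    (hsep : ∀ x ∈ Xr, ∀ y ∈ Xr, x ≠ y → r ≤ dist x y)
    (hC₀ : 1 ≤ C₀)
    (hrad : ∀ i, rad i = infDist (c i) Oᶜ / 8)
    (hφsupp : ∀ i, ∀ x ∉ ball (c i) (2 * rad i), φ i x = 0)
    (hφcount : ∀ x ∈ O, ({i : ι | φ i x ≠ 0}).Finite ∧ ({i : ι | φ i x ≠ 0}).ncard ≤ C₀)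
    (hφ01 : ∀ i x, 0 ≤ φ i x ∧ φ i x ≤ 1)
    (hφlip : ∀ i, ∀ x y : X, |φ i x - φ i y| ≤ (C₀ / rad i) * dist x y)
    (hφsum : ∀ x ∈ O, ∑' i, φ i x = 1)
    (hxb : ∀ i, xb i ∈ Xr ∧ infDist (c i) Oᶜ = infDist (c i) (closedBall (xb i) (r / 4)))
    (hP2 : ∀ x ∈ O, P x = ∑' i, u (xb i) * φ i x)
    (hM : 0 ≤ M) (hδ : ∀ z, infDist z Oᶜ < r) {x y : X} (hx : x ∈ O) (hy : y ∈ O)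
    (hxy : dist x y < r)
    (hosc : ∀ p ∈ Xr, ∀ q ∈ Xr, (dist x p < 2 * r ∨ dist y p < 2 * r) → dist x q < 2 * r →
      |u p - u q| ≤ M) :
    |P x - P y| ≤ 160 * C₀ ^ 2 * M / r * dist x y := by
  classical
  obtain ⟨hfx, hcx⟩ := hφcount x hx
  obtain ⟨hfy, hcy⟩ := hφcount y hy
  set s := hfx.toFinset ∪ hfy.toFinset
  obtain ⟨hPx, hsx⟩ := eq_sum_of_support_subset hφsum hP2 hx (s := s) fun i h =>
    Finset.mem_union_left _ (hfx.mem_toFinset.2 h)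
  obtain ⟨hPy, hsy⟩ := eq_sum_of_support_subset hφsum hP2 hy (s := s) fun i h =>
    Finset.mem_union_right _ (hfy.mem_toFinset.2 h)
  obtain ⟨i₀, -, hi₀⟩ := Finset.exists_ne_zero_of_sum_ne_zero (hsx.trans_ne one_ne_zero)
  have hcard : (s.card : ℝ) ≤ 2 * C₀ := by
    rw [Set.ncard_eq_toFinset_card _ hfx] at hcx
    rw [Set.ncard_eq_toFinset_card _ hfy] at hcy
    have : (s.card : ℝ) ≤ hfx.toFinset.card + hfy.toFinset.card := by
      exact_mod_cast Finset.card_union_le _ _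
    linarith
  rw [hPx, hPy]
  refine (abs_sum_mul_sub_sum_mul_le hsx hsy (u (xb i₀)) fun i _ =>
    abs_sub_mul_abs_sub_le hr hsep hC₀ hrad hφsupp hφ01 hφlip hxb hM hδ hxy hosc hi₀ i).trans ?_
  have hB : 0 ≤ 80 * C₀ * M / r * dist x y := by
    have : 0 ≤ C₀ := by linarith
    positivity
  calc (s.card : ℝ) * (80 * C₀ * M / r * dist x y) ≤ 2 * C₀ * (80 * C₀ * M / r * dist x y) :=
        mul_le_mul_of_nonneg_right hcard hB
    _ = 160 * C₀ ^ 2 * M / r * dist x y := by ring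

end WhitneyProjection

open WhitneyProjection in
theorem stmt_12_general {X : Type*} [MetricSpace X] (N : ℕ)
    (hdoub : ∀ (x : X) (R : ℝ), 0 < R → ∃ S : Finset X, S.card ≤ N ∧
      ball x R ⊆ ⋃ y ∈ S, ball y (R / 2))
    (r : ℝ) (hr : 0 < r) (Xr : Set X)
    (hsep : ∀ x ∈ Xr, ∀ y ∈ Xr, x ≠ y → r ≤ dist x y)
    (hmaxsep : ∀ x : X, ∃ a ∈ Xr, dist x a < r)
    (u : X → ℝ)
    (O : Set X) (hO : O = (⋃ xb ∈ Xr, closedBall xb (r / 4))ᶜ)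
    -- Whitney decomposition of `O` with subordinate Lipschitz partition of unity
    (ι : Type) (c : ι → X) (rad : ι → ℝ) (C₀ : ℝ) (hC₀ : 1 ≤ C₀)
    (hrad : ∀ i, rad i = infDist (c i) Oᶜ / 8)
    (φ : ι → X → ℝ)
    (hφsupp : ∀ i, ∀ x ∉ ball (c i) (2 * rad i), φ i x = 0)
    (hφcount : ∀ x ∈ O, ({i : ι | φ i x ≠ 0}).Finite ∧ ({i : ι | φ i x ≠ 0}).ncard ≤ C₀)
    (hφ01 : ∀ i x, 0 ≤ φ i x ∧ φ i x ≤ 1)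
    (hφlip : ∀ i, ∀ x y : X, |φ i x - φ i y| ≤ (C₀ / rad i) * dist x y)
    (hφsum : ∀ x ∈ O, ∑' i, φ i x = 1)
    -- nearest points of `X_r` to the Whitney centers
    (xb : ι → X) (hxb : ∀ i, xb i ∈ Xr ∧
      infDist (c i) Oᶜ = infDist (c i) (closedBall (xb i) (r / 4)))
    -- the Whitney projection
    (P : X → ℝ)
    (hP1 : ∀ w ∈ Xr, ∀ x ∈ closedBall w (r / 4), P x = u w)
    (hP2 : ∀ x ∈ O, P x = ∑' i, u (xb i) * φ i x) :
    ∃ C : ℝ, 0 < C ∧ ∀ x y : X, dist x y < r →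
      |P x - P y| ≤
        C * sSup ((fun w => discreteGrad r Xr u w) '' (Xr ∩ ball x (3 * r))) * dist x y := by
  have hfin := finite_inter_ball_of_separated (fun x R hR => (hdoub x R hR).imp fun _ h => h.2)
    hr hsep
  have hδ := infDist_compl_lt hr hmaxsep hO
  have hnet : ∀ z ∉ O, ∃ w ∈ Xr, z ∈ closedBall w (r / 4) := fun z hz => by simpa [hO] using hz
  refine ⟨480 * C₀ ^ 2, by positivity, fun x y hxy => ?_⟩
  set G := sSup ((fun w => discreteGrad r Xr u w) '' (Xr ∩ ball x (3 * r)))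
  have hM : 0 ≤ 3 * r * G := mul_nonneg (by positivity)
    (Real.sSup_nonneg (by rintro _ ⟨w, -, rfl⟩; exact discreteGrad_nonneg hr.le w))
  have hosc : ∀ z, dist x z < r → ∀ p ∈ Xr, ∀ q ∈ Xr, dist z p < 2 * r → dist x q < 2 * r →
      |u p - u q| ≤ 3 * r * G := fun z hxz p hp q hq =>
    abs_sub_le_three_mul_sSup_discreteGrad hr hfin hmaxsep hxz hp hq
  have hxx : dist x x < r := by simpa using hr
  suffices h : |P x - P y| ≤ 160 * C₀ ^ 2 * (3 * r * G) / r * dist x y by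
    convert h using 1
    field_simp
    ring
  have hC : ∀ k : ℝ, k ≤ 6 →
      k * (3 * r * G) / r * dist x y ≤ 160 * C₀ ^ 2 * (3 * r * G) / r * dist x y :=
    fun k hk => by gcongr; nlinarith
  by_cases hx : x ∈ O <;> by_cases hy : y ∈ O
  · exact abs_sub_le_of_mem_of_mem hr hsep hC₀ hrad hφsupp hφcount hφ01 hφlip hφsum hxb hP2
      hM hδ hx hy hxy fun p hp q hq hp' => hp'.elim (hosc x hxx p hp q hq) (hosc y hxy p hp q hq)
  · obtain ⟨w, hw, hyw⟩ := hnet y hy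
    rw [hP1 w hw y hyw]
    refine (abs_sub_le_of_mem_of_not_mem hr hsep hrad hφsupp hφcount hφ01 hφsum hxb hP2 hM hδ
      hx hw hyw hy fun p hp hxp => hosc x hxx p hp w hw hxp ?_).trans (hC 6 le_rfl)
    linarith [dist_triangle x y w, mem_closedBall.1 hyw]
  · obtain ⟨w, hw, hxw⟩ := hnet x hx
    rw [hP1 w hw x hxw, abs_sub_comm]
    refine (dist_comm y x ▸ abs_sub_le_of_mem_of_not_mem hr hsep hrad hφsupp hφcount hφ01 hφsum hxb
      hP2 hM hδ hy hw hxw hx fun p hp hyp => hosc y hxy p hp w hw hyp ?_).trans (hC 6 le_rfl)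
    linarith [mem_closedBall.1 hxw]
  · obtain ⟨w, hw, hxw⟩ := hnet x hx
    obtain ⟨w', hw', hyw'⟩ := hnet y hy
    rw [hP1 w hw x hxw, hP1 w' hw' y hyw']
    refine (abs_sub_le_of_mem_closedBall_of_separated hr hsep hM hw hw' hxw hyw' ?_).trans
      (hC 2 (by norm_num))
    rw [abs_sub_comm]
    exact hosc y hxy w' hw' w hw (by linarith [mem_closedBall.1 hyw'])
      (by linarith [mem_closedBall.1 hxw])

/-- The Whitney projection `P_r u` of a discrete function `u : X_r → ℝ`
(equal to `u(x̄)` on each closed ball `B̄(x̄, r/4)` and glued via a Whitney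
partition of unity on the complement `O`) is locally Lipschitz, with local
Lipschitz constant controlled by the supremum of the discrete gradient of `u`
over `X_r ∩ B(x, 3r)`. -/
theorem stmt_12 {X : Type*} [MetricSpace X] (N : ℕ)
    (hdoub : ∀ (x : X) (R : ℝ), 0 < R → ∃ S : Finset X, S.card ≤ N ∧
      ball x R ⊆ ⋃ y ∈ S, ball y (R / 2))
    (r : ℝ) (hr : 0 < r) (Xr : Set X)
    (hsep : ∀ x ∈ Xr, ∀ y ∈ Xr, x ≠ y → r ≤ dist x y)
    (hmaxsep : ∀ x : X, ∃ a ∈ Xr, dist x a < r)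
    (u : X → ℝ)
    (O : Set X) (hO : O = (⋃ xb ∈ Xr, closedBall xb (r / 4))ᶜ)
    -- Whitney decomposition of `O` with subordinate Lipschitz partition of unity
    (ι : Type) (hι : Countable ι) (c : ι → X) (rad : ι → ℝ) (C₀ : ℝ) (hC₀ : 1 ≤ C₀)
    (hrad : ∀ i, rad i = infDist (c i) Oᶜ / 8)
    (hcover : O = ⋃ i, ball (c i) (rad i))
    (φ : ι → X → ℝ)
    (hφsupp : ∀ i, ∀ x ∉ ball (c i) (2 * rad i), φ i x = 0)
    (hφcount : ∀ x ∈ O, ({i : ι | φ i x ≠ 0}).Finite ∧ ({i : ι | φ i x ≠ 0}).ncard ≤ C₀)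
    (hφ01 : ∀ i x, 0 ≤ φ i x ∧ φ i x ≤ 1)
    (hφlow : ∀ i, ∀ x ∈ ball (c i) (rad i), C₀⁻¹ ≤ φ i x)
    (hφlip : ∀ i, ∀ x y : X, |φ i x - φ i y| ≤ (C₀ / rad i) * dist x y)
    (hφsum : ∀ x ∈ O, ∑' i, φ i x = 1)
    -- nearest points of `X_r` to the Whitney centers
    (xb : ι → X) (hxb : ∀ i, xb i ∈ Xr ∧
      infDist (c i) Oᶜ = infDist (c i) (closedBall (xb i) (r / 4)))
    -- the Whitney projection
    (P : X → ℝ)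
    (hP1 : ∀ w ∈ Xr, ∀ x ∈ closedBall w (r / 4), P x = u w)
    (hP2 : ∀ x ∈ O, P x = ∑' i, u (xb i) * φ i x) :
    ∃ C : ℝ, 0 < C ∧ ∀ x y : X, dist x y < r →
      |P x - P y| ≤
        C * sSup ((fun w => discreteGrad r Xr u w) '' (Xr ∩ ball x (3 * r))) * dist x y :=
  stmt_12_general N hdoub r hr Xr hsep hmaxsep u O hO ι c rad C₀ hC₀ hrad φ hφsupp hφcount hφ01
    hφlip hφsum xb hxb P hP1 hP2
end

section
/- Let f : X → ℝ be a function on a metric space X and suppose that for some constant C > 0 and some function h : X → [0,∞], for every rectifiable curve γ : [a,b] → X of length less than r one has |f(γ(b)) − f(γ(a))| ≤ C (sup_{z ∈ B(γ(b), 3r)} h(z)) · length(γ). Then the function g(x) = C sup_{z ∈ B(x, 4r)} h(z) is an upper gradient of f, i.e., |f(γ(b)) − f(γ(a))| ≤ ∫_γ g ds for every rectifiable curve γ. -/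
open Metric
open scoped ENNReal

/-- `g` is an upper gradient of `f`: along every rectifiable curve (unit-speed,
`1`-Lipschitz on `[0,L]`), `|f(γ(L)) - f(γ(0))| ≤ ∫_γ g ds`. -/
def IsUpperGradient {X : Type*} [MetricSpace X]
    (f : X → ℝ) (g : X → ℝ≥0∞) : Prop :=
  ∀ (L : ℝ) (γ : ℝ → X), 0 ≤ L → LipschitzOnWith 1 γ (Set.Icc 0 L) →
    ENNReal.ofReal |f (γ L) - f (γ 0)| ≤ ∫⁻ t in Set.Icc (0 : ℝ) L, g (γ t)

/-!
Cut the curve into `n` consecutive pieces of common length `δ = L / n < r`. On a piece `[a, b]`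
every point `γ t` lies within `δ < r` of the endpoint `γ b`, so `B(γ b, 3r) ⊆ B(γ t, 4r)`, and
the local estimate `C (sup_{B(γ b, 3r)} h) (b - a)` is at most `∫_a^b g(γ t) dt` for
`g = C sup_{B(·, 4r)} h`. Summing over the pieces with the triangle inequality for `f ∘ γ` gives
the upper gradient inequality.
-/

open MeasureTheory Set

lemma LipschitzOnWith.comp_const_add_Icc {X : Type*} [PseudoEMetricSpace X] {γ : ℝ → X}
    {L a δ : ℝ} (hγ : LipschitzOnWith 1 γ (Icc 0 L)) (ha : 0 ≤ a) (haδ : a + δ ≤ L) :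
    LipschitzOnWith 1 (fun t => γ (a + t)) (Icc 0 δ) := by
  have hshift : LipschitzWith 1 (fun t : ℝ => a + t) :=
    (IsometryEquiv.addLeft a).isometry.lipschitz
  have hcomp := hγ.comp hshift.lipschitzOnWith fun t (ht : t ∈ Icc 0 δ) =>
    show a + t ∈ Icc 0 L from ⟨by linarith [ht.1], by linarith [ht.2]⟩
  rwa [mul_one] at hcomp

lemma edist_le_setLIntegral_Ioc_of_monotone {Y : Type*} [PseudoEMetricSpace Y] (u : ℝ → Y)
    (G : ℝ → ℝ≥0∞) {t : ℕ → ℝ} (ht : Monotone t) (n : ℕ)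
    (hstep : ∀ k < n, edist (u (t (k + 1))) (u (t k)) ≤ ∫⁻ s in Ioc (t k) (t (k + 1)), G s) :
    edist (u (t n)) (u (t 0)) ≤ ∫⁻ s in Ioc (t 0) (t n), G s := by
  induction n with
  | zero => simp
  | succ n ih =>
    calc edist (u (t (n + 1))) (u (t 0))
        ≤ edist (u (t n)) (u (t 0)) + edist (u (t (n + 1))) (u (t n)) :=
          (edist_triangle _ (u (t n)) _).trans_eq (add_comm _ _)
      _ ≤ (∫⁻ s in Ioc (t 0) (t n), G s) + ∫⁻ s in Ioc (t n) (t (n + 1)), G s :=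
          add_le_add (ih fun k hk => hstep k (by omega)) (hstep n n.lt_succ_self)
      _ = ∫⁻ s in Ioc (t 0) (t (n + 1)), G s := by
          rw [← lintegral_union measurableSet_Ioc (Ioc_disjoint_Ioc_of_le le_rfl),
            Ioc_union_Ioc_eq_Ioc (ht (Nat.zero_le n)) (ht n.le_succ)]

lemma edist_le_setLIntegral_Ioc_of_sub_lt {X : Type*} [MetricSpace X] {r : ℝ} {f : X → ℝ}
    {h : X → ℝ≥0∞} {C : ℝ≥0∞}
    (hloc : ∀ (L : ℝ) (γ : ℝ → X), 0 ≤ L → L < r → LipschitzOnWith 1 γ (Icc 0 L) →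
      ENNReal.ofReal |f (γ L) - f (γ 0)| ≤
        C * (⨆ z ∈ ball (γ L) (3 * r), h z) * ENNReal.ofReal L)
    {γ : ℝ → X} {L a b : ℝ} (hγ : LipschitzOnWith 1 γ (Icc 0 L))
    (ha : 0 ≤ a) (hab : a ≤ b) (hb : b ≤ L) (hba : b - a < r) :
    edist (f (γ b)) (f (γ a)) ≤ ∫⁻ t in Ioc a b, C * ⨆ z ∈ ball (γ t) (4 * r), h z := by
  have hpiece := hloc (b - a) (fun t => γ (a + t)) (sub_nonneg.2 hab) hba
    (hγ.comp_const_add_Icc ha (by linarith))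
  simp only [add_zero, add_sub_cancel] at hpiece
  have hball : ∀ t ∈ Ioc a b,
      C * (⨆ z ∈ ball (γ b) (3 * r), h z) ≤ C * ⨆ z ∈ ball (γ t) (4 * r), h z := by
    intro t ht
    have hdist : dist (γ b) (γ t) ≤ b - t := by
      simpa [Real.dist_eq, abs_of_nonneg (sub_nonneg.2 ht.2)] using
        hγ.dist_le_mul b ⟨by linarith, hb⟩ t ⟨by linarith [ht.1], ht.2.trans hb⟩
    gcongr C * ?_
    exact biSup_mono fun z hz => ball_subset_ball' (by linarith [ht.1]) hz
  calc edist (f (γ b)) (f (γ a))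
      = ENNReal.ofReal |f (γ b) - f (γ a)| := by rw [edist_dist, Real.dist_eq]
    _ ≤ C * (⨆ z ∈ ball (γ b) (3 * r), h z) * ENNReal.ofReal (b - a) := hpiece
    _ = ∫⁻ _ in Ioc a b, C * ⨆ z ∈ ball (γ b) (3 * r), h z := by
      rw [setLIntegral_const, Real.volume_Ioc]
    _ ≤ ∫⁻ t in Ioc a b, C * ⨆ z ∈ ball (γ t) (4 * r), h z :=
      setLIntegral_mono' measurableSet_Ioc hball

theorem stmt_13_general {X : Type*} [MetricSpace X] (r : ℝ) (hr : 0 < r)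
    (f : X → ℝ) (h : X → ℝ≥0∞) (C : ℝ≥0∞)
    (hloc : ∀ (L : ℝ) (γ : ℝ → X), 0 ≤ L → L < r → LipschitzOnWith 1 γ (Set.Icc 0 L) →
      ENNReal.ofReal |f (γ L) - f (γ 0)| ≤
        C * (⨆ z ∈ ball (γ L) (3 * r), h z) * ENNReal.ofReal L) :
    IsUpperGradient f (fun x => C * ⨆ z ∈ ball x (4 * r), h z) := by
  intro L γ hL hγ
  obtain ⟨n, hn⟩ := exists_nat_gt (L / r)
  have hn₀ : (0 : ℝ) < n := (div_nonneg hL hr.le).trans_lt hn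
  set δ := L / n
  have hδ : 0 ≤ δ := div_nonneg hL hn₀.le
  have hδr : δ < r := by rwa [div_lt_iff₀ hn₀, mul_comm, ← div_lt_iff₀ hr]
  have hnδ : n * δ = L := mul_div_cancel₀ L hn₀.ne'
  have hchain := edist_le_setLIntegral_Ioc_of_monotone (f ∘ γ)
    (fun t => C * ⨆ z ∈ ball (γ t) (4 * r), h z) (Nat.mono_cast.mul_const hδ) n fun k hk => by
      have hk' : (k + 1 : ℝ) ≤ n := by exact_mod_cast hk
      push_cast
      exact edist_le_setLIntegral_Ioc_of_sub_lt hloc hγ (by positivity) (by nlinarith)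
        (by nlinarith) (by linarith)
  simp only [Nat.cast_zero, zero_mul, hnδ, Function.comp] at hchain
  rw [← Real.dist_eq, ← edist_dist]
  exact hchain.trans (lintegral_mono_set Ioc_subset_Icc_self)

/-- If `f` satisfies the local estimate
`|f(γ(b)) - f(γ(a))| ≤ C (sup_{B(γ(b),3r)} h) · length(γ)` for all rectifiable
curves of length `< r`, then `x ↦ C · sup_{B(x,4r)} h` is an upper gradient of `f`. -/
theorem stmt_13 {X : Type*} [MetricSpace X] (r : ℝ) (hr : 0 < r)
    (f : X → ℝ) (h : X → ℝ≥0∞) (C : ℝ≥0∞) (hC : 0 < C)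
    (hloc : ∀ (L : ℝ) (γ : ℝ → X), 0 ≤ L → L < r → LipschitzOnWith 1 γ (Set.Icc 0 L) →
      ENNReal.ofReal |f (γ L) - f (γ 0)| ≤
        C * (⨆ z ∈ ball (γ L) (3 * r), h z) * ENNReal.ofReal L) :
    IsUpperGradient f (fun x => C * ⨆ z ∈ ball x (4 * r), h z) :=
  stmt_13_general r hr f h C hloc
end
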